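/- Let X be a real Banach space and T : X ⇉ X* a maximal monotone operator. Then σ_T ≥ J σ_T pointwise, where σ_T := sup_{h ∈ H(T)} h; that is, σ_T ∈ H_a(T). -/

import Mathlib

/- Setting: `X` is a real Banach space, `NormedSpace.Dual ℝ X` its topological dual.
A point-to-set operator `T : X ⇉ X*` is identified with its graph,
a subset of `X × NormedSpace.Dual ℝ X`.  Extended-real-valued functions
(`ℝ ∪ {+∞}`) are modelled by `EReal`. -/

noncomputable section

variable {X : Type*} [NormedAddCommGroup X] [NormedSpace ℝ X]

/-- The duality pairing `⟨x, x*⟩ = x*(x)` of a pair `p = (x, x*)`. -/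
def pairingFn (p : X × StrongDual ℝ X) : ℝ := p.2 p.1

/-- Convexity for extended-real-valued functions. -/
def EConvexOn {E : Type*} [AddCommMonoid E] [Module ℝ E] (h : E → EReal) : Prop :=
  ∀ p q : E, ∀ a b : ℝ, 0 ≤ a → 0 ≤ b → a + b = 1 →
    h (a • p + b • q) ≤ (a : EReal) * h p + (b : EReal) * h q

/-- `T` is a monotone operator: `⟨x - y, x* - y*⟩ ≥ 0` on the graph. -/
def MonotoneOp (T : Set (X × StrongDual ℝ X)) : Prop :=
  ∀ p ∈ T, ∀ q ∈ T, 0 ≤ (p.2 - q.2) (p.1 - q.1)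

/-- `T` is maximal monotone. -/
def MaximalMonotoneOp (T : Set (X × StrongDual ℝ X)) : Prop :=
  MonotoneOp T ∧
    ∀ p : X × StrongDual ℝ X, (∀ q ∈ T, 0 ≤ (p.2 - q.2) (p.1 - q.1)) → p ∈ T

/-- The transform `J h (x, x*) = sup_{(y, y*)} ⟨x, y*⟩ + ⟨y, x*⟩ - h (y, y*)`,
i.e. `J h (x, x*) = h* (x*, x)` via the canonical injection `X ↪ X**`. -/
def JT (h : X × StrongDual ℝ X → EReal) : X × StrongDual ℝ X → EReal :=
  fun p => ⨆ q : X × StrongDual ℝ X, (((q.2 p.1 + p.2 q.1 : ℝ) : EReal) - h q)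

/-- The family `H(T)` of convex lower semicontinuous functions on `X × X*`
majorizing the duality product and coinciding with it on `T`. -/
def HT (T : Set (X × StrongDual ℝ X)) : Set (X × StrongDual ℝ X → EReal) :=
  { h | EConvexOn h ∧ LowerSemicontinuous h ∧
      (∀ p : X × StrongDual ℝ X, (pairingFn p : EReal) ≤ h p) ∧
      (∀ p ∈ T, h p = (pairingFn p : EReal)) }

/-- The subfamily `H_a(T) = { h ∈ H(T) | h ≥ J h }`. -/
def Ha (T : Set (X × StrongDual ℝ X)) : Set (X × StrongDual ℝ X → EReal) :=
  { h | h ∈ HT T ∧ JT h ≤ h }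

/-- For `h ∈ H(T)`, the family `L(h) = { g ∈ H(T) | h ≥ g ≥ J g }`. -/
def Lfam (T : Set (X × StrongDual ℝ X)) (h : X × StrongDual ℝ X → EReal) :
    Set (X × StrongDual ℝ X → EReal) :=
  { g | g ∈ HT T ∧ g ≤ h ∧ JT g ≤ g }

/-- The Fenchel–Legendre conjugate `f*(x*) = sup_x ⟨x, x*⟩ - f x`. -/
def fconj (f : X → EReal) : StrongDual ℝ X → EReal :=
  fun x' => ⨆ x : X, (((x' x : ℝ) : EReal) - f x)

/-- The `ε`-subdifferential:
`∂_ε f (x) = { x* | f y ≥ f x + ⟨y - x, x*⟩ - ε for all y }`. -/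
def epsSubdiff (f : X → EReal) (ε : ℝ) (x : X) : Set (StrongDual ℝ X) :=
  { x' | ∀ y : X, f x + ((x' (y - x) - ε : ℝ) : EReal) ≤ f y }

/-- The graph of the subdifferential `∂f = ∂_0 f`. -/
def subdiffGraph (f : X → EReal) : Set (X × StrongDual ℝ X) :=
  { p | p.2 ∈ epsSubdiff f 0 p.1 }

/-- The `ε`-enlargement `T^ε (x) = { x* | ⟨x - y, x* - y*⟩ ≥ -ε for all (y, y*) ∈ T }`. -/
def enl (T : Set (X × StrongDual ℝ X)) (ε : ℝ) (x : X) :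
    Set (StrongDual ℝ X) :=
  { x' | ∀ q ∈ T, -ε ≤ (x' - q.2) (x - q.1) }

/-- The Fitzpatrick function
`φ_T (x, x*) = sup_{(y, y*) ∈ T} ⟨x, y*⟩ + ⟨y, x*⟩ - ⟨y, y*⟩`. -/
def fitz (T : Set (X × StrongDual ℝ X)) : X × StrongDual ℝ X → EReal :=
  fun p => ⨆ q ∈ T, ((q.2 p.1 + p.2 q.1 - q.2 q.1 : ℝ) : EReal)

/- Write `π` for the duality pairing and `δ_T` for the indicator of `T` (`0` on `T`, `+∞` off
it). The Fitzpatrick function is a J-transform, `φ_T = J (π + δ_T)`, so it is convex and lower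
semicontinuous, and `φ_T ≤ π + δ_T` (monotonicity) gives `φ_T ≤ J φ_T` because `J` is
antitone. Maximality makes `φ_T ≥ π`, whence both `φ_T` and `J φ_T` lie in `H(T)`. As
`σ_T ≥ φ_T`, `J σ_T ≤ J φ_T ≤ σ_T`. -/

theorem EConvexOn.iSup {E : Type*} [AddCommMonoid E] [Module ℝ E] {ι : Sort*}
    {f : ι → E → EReal} (hf : ∀ i, EConvexOn (f i)) : EConvexOn fun p => ⨆ i, f i p := by
  intro p q a b ha hb hab
  refine iSup_le fun i => (hf i p q a b ha hb hab).trans ?_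
  gcongr <;> first | exact_mod_cast ha | exact_mod_cast hb | exact le_iSup (f · _) i

theorem econvexOn_coe_sub {E : Type*} [AddCommMonoid E] [Module ℝ E] (ℓ : E →ₗ[ℝ] ℝ)
    (c : EReal) : EConvexOn fun p => (ℓ p : EReal) - c := by
  intro p q a b ha hb hab
  induction c with
  | bot =>
    have hpos : 0 < a ∨ 0 < b := by
      by_contra! h; linarith [h.1.antisymm ha, h.2.antisymm hb]
    rcases hpos with h | h <;> simp [EReal.coe_mul_top_of_pos h, EReal.top_add_of_ne_bot,
      EReal.add_top_of_ne_bot, EReal.mul_ne_bot, ha, hb]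
  | coe c =>
    simp only [map_add, map_smul, smul_eq_mul, ← EReal.coe_sub, ← EReal.coe_mul,
      ← EReal.coe_add]
    exact EReal.coe_le_coe_iff.2 (le_of_eq (by linear_combination c * hab))
  | top => simp [EReal.sub_top]

theorem lowerSemicontinuous_coe_sub {E : Type*} [TopologicalSpace E] {f : E → ℝ}
    (hf : Continuous f) (c : EReal) : LowerSemicontinuous fun p => (f p : EReal) - c := by
  induction c with
  | bot => simpa only [EReal.coe_sub_bot] using lowerSemicontinuous_const
  | coe c =>
    simp only [← EReal.coe_sub]
    exact (continuous_coe_real_ereal.comp (hf.sub continuous_const)).lowerSemicontinuous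
  | top => simpa only [EReal.sub_top] using lowerSemicontinuous_const

def couple (q : X × StrongDual ℝ X) : X × StrongDual ℝ X →L[ℝ] ℝ :=
  q.2.comp (ContinuousLinearMap.fst ℝ X _) +
    (ContinuousLinearMap.apply ℝ ℝ q.1).comp (ContinuousLinearMap.snd ℝ X _)

@[simp]
theorem couple_apply (q p : X × StrongDual ℝ X) : couple q p = q.2 p.1 + p.2 q.1 := rfl

theorem JT_antitone : Antitone (JT (X := X)) := fun _ _ hle _ =>
  iSup_mono fun q => EReal.sub_le_sub le_rfl (hle q)

theorem econvexOn_JT (h : X × StrongDual ℝ X → EReal) : EConvexOn (JT h) :=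
  EConvexOn.iSup fun q => econvexOn_coe_sub (couple q).toLinearMap (h q)

theorem lowerSemicontinuous_JT (h : X × StrongDual ℝ X → EReal) : LowerSemicontinuous (JT h) :=
  lowerSemicontinuous_iSup fun q => lowerSemicontinuous_coe_sub (couple q).continuous (h q)

open Classical in
/-- The function `π + δ_T`. -/
def pairingOn (T : Set (X × StrongDual ℝ X)) : X × StrongDual ℝ X → EReal :=
  fun q => if q ∈ T then (pairingFn q : EReal) else ⊤

theorem fitz_eq_JT_pairingOn (T : Set (X × StrongDual ℝ X)) : fitz T = JT (pairingOn T) := by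
  funext p
  refine iSup_congr fun q => ?_
  by_cases hq : q ∈ T
  · simp only [hq, iSup_pos, pairingOn, if_true, pairingFn, ← EReal.coe_sub]
  · simp [hq, pairingOn, EReal.sub_top]

theorem fitz_le_pairingOn {T : Set (X × StrongDual ℝ X)} (hT : MonotoneOp T) :
    fitz T ≤ pairingOn T := by
  intro p
  by_cases hp : p ∈ T
  · simp only [pairingOn, hp, if_true]
    refine iSup₂_le fun q hq => EReal.coe_le_coe_iff.2 ?_
    have hmono := hT p hp q hq
    simp only [sub_apply, map_sub, pairingFn] at hmono ⊢
    linarith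
  · simp [pairingOn, hp]

theorem pairing_le_fitz {T : Set (X × StrongDual ℝ X)} (hT : MaximalMonotoneOp T)
    (p : X × StrongDual ℝ X) : (pairingFn p : EReal) ≤ fitz T p := by
  by_cases hp : ∀ q ∈ T, 0 ≤ (p.2 - q.2) (p.1 - q.1)
  · refine le_iSup₂_of_le p (hT.2 p hp) (EReal.coe_le_coe_iff.2 ?_)
    simp only [pairingFn]
    linarith
  · push Not at hp
    obtain ⟨q, hq, hlt⟩ := hp
    refine le_iSup₂_of_le q hq (EReal.coe_le_coe_iff.2 ?_)
    simp only [sub_apply, map_sub, pairingFn] at hlt ⊢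
    linarith

theorem fitz_mem_HT {T : Set (X × StrongDual ℝ X)} (hT : MaximalMonotoneOp T) :
    fitz T ∈ HT T := by
  refine ⟨?_, ?_, pairing_le_fitz hT, fun p hp => le_antisymm ?_ (pairing_le_fitz hT p)⟩
  · exact fitz_eq_JT_pairingOn T ▸ econvexOn_JT _
  · exact fitz_eq_JT_pairingOn T ▸ lowerSemicontinuous_JT _
  · simpa [pairingOn, hp] using fitz_le_pairingOn hT.1 p

theorem fitz_le_JT_fitz {T : Set (X × StrongDual ℝ X)} (hT : MonotoneOp T) :
    fitz T ≤ JT (fitz T) := by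
  conv_lhs => rw [fitz_eq_JT_pairingOn]
  exact JT_antitone (fitz_le_pairingOn hT)

theorem JT_fitz_le_pairing {T : Set (X × StrongDual ℝ X)} {p : X × StrongDual ℝ X}
    (hp : p ∈ T) : JT (fitz T) p ≤ pairingFn p := by
  refine iSup_le fun q => ?_
  have hq : ((couple q p - pairingFn p : ℝ) : EReal) ≤ fitz T q := by
    refine le_iSup₂_of_le p hp (le_of_eq ?_)
    simp only [couple_apply, pairingFn]
    ring_nf
  calc (couple q p : EReal) - fitz T q
      ≤ (couple q p : EReal) - ((couple q p - pairingFn p : ℝ) : EReal) :=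
        EReal.sub_le_sub le_rfl hq
    _ = pairingFn p := by rw [← EReal.coe_sub]; ring_nf

theorem JT_fitz_mem_HT {T : Set (X × StrongDual ℝ X)} (hT : MaximalMonotoneOp T) :
    JT (fitz T) ∈ HT T := by
  have hle p := (pairing_le_fitz hT p).trans (fitz_le_JT_fitz hT.1 p)
  exact ⟨econvexOn_JT _, lowerSemicontinuous_JT _, hle,
    fun p hp => le_antisymm (JT_fitz_le_pairing hp) (hle p)⟩

theorem biSup_mem_HT {T : Set (X × StrongDual ℝ X)} {S : Set (X × StrongDual ℝ X → EReal)}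
    (hS : S ⊆ HT T) (hne : S.Nonempty) : (fun p => ⨆ h ∈ S, h p) ∈ HT T := by
  obtain ⟨h₀, hh₀⟩ := hne
  have hge p : (pairingFn p : EReal) ≤ ⨆ h ∈ S, h p :=
    le_iSup₂_of_le h₀ hh₀ ((hS hh₀).2.2.1 p)
  refine ⟨EConvexOn.iSup fun h => EConvexOn.iSup fun hh => (hS hh).1,
    lowerSemicontinuous_biSup fun h hh => (hS hh).2.1, hge, fun p hp => ?_⟩
  exact le_antisymm (iSup₂_le fun h hh => ((hS hh).2.2.2 p hp).le) (hge p)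

theorem sigma_mem_Ha_general
    (T : Set (X × StrongDual ℝ X)) (hT : MaximalMonotoneOp T) :
    JT (fun p => ⨆ h ∈ HT T, h p) ≤ (fun p => ⨆ h ∈ HT T, h p) ∧
      (fun p => ⨆ h ∈ HT T, h p) ∈ Ha T := by
  set σ : X × StrongDual ℝ X → EReal := fun p => ⨆ h ∈ HT T, h p
  have le_σ : ∀ h ∈ HT T, h ≤ σ := fun h hh p => le_iSup₂_of_le h hh le_rfl
  have hφ := fitz_mem_HT hT
  have hJσ : JT σ ≤ σ :=
    (JT_antitone (le_σ _ hφ)).trans (le_σ _ (JT_fitz_mem_HT hT))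
  exact ⟨hJσ, biSup_mem_HT subset_rfl ⟨_, hφ⟩, hJσ⟩

/-- `σ_T = sup_{h ∈ H(T)} h` satisfies `σ_T ≥ J σ_T` pointwise,
that is, `σ_T ∈ H_a(T)`. -/
theorem sigma_mem_Ha [CompleteSpace X]
    (T : Set (X × StrongDual ℝ X)) (hT : MaximalMonotoneOp T) :
    JT (fun p => ⨆ h ∈ HT T, h p) ≤ (fun p => ⨆ h ∈ HT T, h p) ∧
      (fun p => ⨆ h ∈ HT T, h p) ∈ Ha T :=
  sigma_mem_Ha_general T hT
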